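/- Let H be a connected k-uniform hypergraph with m ≥ 1 edges and signless Laplacian eigenpair (ρ, x). Then x_max ≥ √( ρ/(k²m) ), and equality holds if and only if H is regular. -/

import Mathlib

/-!
Since `Q = B Bᵀ`, the eigenvalue is `ρ = xᵀ Q x = ∑ₑ (∑_{w ∈ e} x_w)²`, and every edge sum is at
most `k x_max`; hence `ρ ≤ k² m x_max²`. Equality forces every edge sum to be `k x_max`, so `x` is
constant, and then `Q x = ρ x` reads `k d(v) = ρ` at every vertex. Conversely, if `H` is
`r`-regular then `Q 1 = r k 1`, and the symmetry of `Q` gives `ρ = r k`. At a vertex where `x` is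
maximal, `ρ x_max = ∑_{e ∋ v} ∑_{w ∈ e} x_w ≤ r k x_max` is then an equality, so `x` is maximal on
every edge through that vertex, and by connectivity everywhere; a constant `x` attains equality.
-/

open Finset Matrix

variable {V : Type*} [Fintype V] [DecidableEq V]

/-- The incidence matrix of a hypergraph with vertex type `V` and edge set `E`:
`B(v,e) = 1` if `v ∈ e` and `0` otherwise. -/
def inc (E : Finset (Finset V)) : Matrix V ↥E ℝ :=
  fun v e => if v ∈ (e : Finset V) then 1 else 0

/-- The signless Laplacian matrix `Q = B * Bᵀ`. -/
def signlessLap (E : Finset (Finset V)) : Matrix V V ℝ :=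
  inc E * (inc E)ᵀ

/-- The degree of a vertex: the number of edges containing it. -/
def deg (E : Finset (Finset V)) (v : V) : ℕ :=
  (E.filter fun e => v ∈ e).card

/-- A hypergraph is connected if the reflexive-transitive closure of the relation
"`u ≠ v` and some edge contains both `u` and `v`" relates every pair of vertices. -/
def HConnected (E : Finset (Finset V)) : Prop :=
  ∀ u v : V, Relation.ReflTransGen (fun a b => a ≠ b ∧ ∃ e ∈ E, a ∈ e ∧ b ∈ e) u v

/-- A hypergraph is regular if all vertices have the same degree. -/
def HRegular (E : Finset (Finset V)) : Prop :=
  ∃ r, ∀ v : V, deg E v = r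

/-- A signless Laplacian eigenpair `(ρ, x)`: `x` is entrywise positive,
normalized by `∑ v, x v ^ 2 = 1`, and `Q x = ρ x`. -/
def Eigenpair (E : Finset (Finset V)) (ρ : ℝ) (x : V → ℝ) : Prop :=
  (∀ v, 0 < x v) ∧ (∑ v, x v ^ 2 = 1) ∧ (signlessLap E).mulVec x = ρ • x

def edgeSum {α : Type*} (x : α → ℝ) (e : Finset α) : ℝ :=
  ∑ w ∈ e, x w

section EdgeSum

variable {α : Type*} {x : α → ℝ} {e : Finset α} {M : ℝ}

lemma edgeSum_nonneg (hx : ∀ w, 0 ≤ x w) : 0 ≤ edgeSum x e :=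
  Finset.sum_nonneg fun w _ => hx w

lemma edgeSum_le (hle : ∀ w, x w ≤ M) : edgeSum x e ≤ e.card * M := by
  simpa [edgeSum] using Finset.sum_le_card_nsmul e x M fun w _ => hle w

lemma edgeSum_eq_card_mul_iff (hle : ∀ w, x w ≤ M) :
    edgeSum x e = e.card * M ↔ ∀ w ∈ e, x w = M := by
  rw [edgeSum, ← nsmul_eq_mul, ← Finset.sum_const]
  exact Finset.sum_eq_sum_iff_of_le fun w _ => hle w

lemma edgeSum_of_forall_eq (h : ∀ w ∈ e, x w = M) : edgeSum x e = e.card * M := by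
  rw [edgeSum, Finset.sum_congr rfl h, Finset.sum_const, nsmul_eq_mul]

end EdgeSum

section Connectivity

variable {α : Type*} {E : Finset (Finset α)}

lemma HConnected.forall_of_closed (hconn : HConnected E) {p : α → Prop}
    (hp : ∀ e ∈ E, ∀ a ∈ e, p a → ∀ b ∈ e, p b) {v₀ : α} (h₀ : p v₀) (v : α) : p v := by
  induction hconn v₀ v with
  | refl => exact h₀
  | tail _ hab ih =>
    obtain ⟨_, e, he, ha, hb⟩ := hab
    exact hp e he _ ha ih _ hb

lemma HConnected.exists_mem (hconn : HConnected E) (hE : ∃ e ∈ E, e.Nonempty) (v : α) :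
    ∃ e ∈ E, v ∈ e := by
  obtain ⟨e₀, he₀, u, hu⟩ := hE
  rcases (hconn v u).cases_head with rfl | ⟨_, ⟨_, e, he, hv, _⟩, _⟩
  exacts [⟨e₀, he₀, hu⟩, ⟨e, he, hv⟩]

end Connectivity

section SignlessLaplacian

variable (E : Finset (Finset V)) (x : V → ℝ)

lemma signlessLap_mulVec_apply (v : V) :
    (signlessLap E *ᵥ x) v = ∑ e ∈ E with v ∈ e, edgeSum x e := by
  rw [signlessLap, ← mulVec_mulVec, Finset.sum_filter, ← Finset.sum_coe_sort E]
  simp [mulVec_eq_sum, inc, edgeSum]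

lemma dotProduct_signlessLap_mulVec :
    x ⬝ᵥ (signlessLap E *ᵥ x) = ∑ e ∈ E, edgeSum x e ^ 2 := by
  rw [signlessLap, ← mulVec_mulVec, dotProduct_mulVec, ← mulVec_transpose, dotProduct,
    ← Finset.sum_coe_sort E]
  simp [mulVec, dotProduct, inc, edgeSum, sq]

lemma signlessLap_mulVec_const_apply {k : ℕ} (hunif : ∀ e ∈ E, e.card = k) (c : ℝ) (v : V) :
    (signlessLap E *ᵥ fun _ => c) v = deg E v * k * c := by
  rw [signlessLap_mulVec_apply, Finset.sum_congr rfl fun e he => ?_, Finset.sum_const,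
    nsmul_eq_mul, deg, mul_assoc]
  rw [edgeSum_of_forall_eq fun _ _ => rfl, hunif e (Finset.mem_filter.1 he).1]

end SignlessLaplacian

namespace Eigenpair

variable {E : Finset (Finset V)} {ρ : ℝ} {x : V → ℝ} {k : ℕ} {M : ℝ}

lemma nonempty (hx : Eigenpair E ρ x) : Nonempty V := by
  by_contra h
  have := hx.2.1
  simp [not_nonempty_iff.1 h] at this

lemma sum_edgeSum_incident (hx : Eigenpair E ρ x) (v : V) :
    ∑ e ∈ E with v ∈ e, edgeSum x e = ρ * x v := by
  rw [← signlessLap_mulVec_apply, hx.2.2, Pi.smul_apply, smul_eq_mul]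

lemma eigenvalue_eq_sum_edgeSum_sq (hx : Eigenpair E ρ x) : ρ = ∑ e ∈ E, edgeSum x e ^ 2 := by
  rw [← dotProduct_signlessLap_mulVec, hx.2.2, dotProduct_smul, smul_eq_mul, dotProduct]
  simp [← sq, hx.2.1]

lemma eigenvalue_nonneg (hx : Eigenpair E ρ x) : 0 ≤ ρ :=
  hx.eigenvalue_eq_sum_edgeSum_sq ▸ Finset.sum_nonneg fun _ _ => sq_nonneg _

lemma sq_edgeSum_le (hx : Eigenpair E ρ x) (hle : ∀ v, x v ≤ M) (e : Finset V) :
    edgeSum x e ^ 2 ≤ (e.card * M) ^ 2 :=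
  pow_le_pow_left₀ (edgeSum_nonneg fun v => (hx.1 v).le) (edgeSum_le hle) 2

lemma eigenvalue_le (hunif : ∀ e ∈ E, e.card = k) (hx : Eigenpair E ρ x) (hle : ∀ v, x v ≤ M) :
    ρ ≤ k ^ 2 * E.card * M ^ 2 := by
  calc ρ = ∑ e ∈ E, edgeSum x e ^ 2 := hx.eigenvalue_eq_sum_edgeSum_sq
    _ ≤ ∑ _e ∈ E, (k * M) ^ 2 :=
      Finset.sum_le_sum fun e he => hunif e he ▸ hx.sq_edgeSum_le hle e
    _ = k ^ 2 * E.card * M ^ 2 := by rw [Finset.sum_const, nsmul_eq_mul]; ring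

lemma eigenvalue_eq_iff (hunif : ∀ e ∈ E, e.card = k) (hx : Eigenpair E ρ x)
    (hle : ∀ v, x v ≤ M) (hcover : ∀ v, ∃ e ∈ E, v ∈ e) :
    ρ = k ^ 2 * E.card * M ^ 2 ↔ ∀ v, x v = M := by
  have hsum : (k : ℝ) ^ 2 * E.card * M ^ 2 = ∑ _e ∈ E, (k * M) ^ 2 := by
    rw [Finset.sum_const, nsmul_eq_mul]; ring
  rw [hsum, hx.eigenvalue_eq_sum_edgeSum_sq,
    Finset.sum_eq_sum_iff_of_le fun e he => hunif e he ▸ hx.sq_edgeSum_le hle e]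
  constructor
  · intro h v
    obtain ⟨e, he, hv⟩ := hcover v
    have hM : 0 ≤ M := (hx.1 v).le.trans (hle v)
    have := (sq_eq_sq₀ (edgeSum_nonneg fun v => (hx.1 v).le) (by positivity)).1 (h e he)
    exact (edgeSum_eq_card_mul_iff hle).1 (hunif e he ▸ this) v hv
  · intro h e he
    rw [edgeSum_of_forall_eq fun w _ => h w, hunif e he]

lemma hRegular_of_forall_eq (hunif : ∀ e ∈ E, e.card = k) (hk : k ≠ 0)
    (hx : Eigenpair E ρ x) (hconst : ∀ v, x v = M) : HRegular E := by
  obtain rfl : x = fun _ => M := funext hconst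
  obtain ⟨v₀⟩ := hx.nonempty
  have hM : 0 < M := hx.1 v₀
  have hdeg (v : V) : (deg E v : ℝ) * k * M = ρ * M := by
    rw [← signlessLap_mulVec_const_apply E hunif, hx.2.2, Pi.smul_apply, smul_eq_mul]
  refine ⟨deg E v₀, fun v => ?_⟩
  have := mul_right_cancel₀ hM.ne' ((hdeg v).trans (hdeg v₀).symm)
  exact_mod_cast mul_right_cancel₀ (by exact_mod_cast hk) this

lemma eigenvalue_eq_of_deg_eq (hunif : ∀ e ∈ E, e.card = k) (hx : Eigenpair E ρ x) {r : ℕ}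
    (hreg : ∀ v, deg E v = r) : ρ = r * k := by
  have hQ1 : (signlessLap E *ᵥ fun _ => 1) = (r * k : ℝ) • fun _ => 1 := by
    ext v
    simp [signlessLap_mulVec_const_apply E hunif, hreg]
  have hsymm : (signlessLap E)ᵀ = signlessLap E := by
    rw [signlessLap, transpose_mul, transpose_transpose]
  have h : ρ * ((fun _ => 1) ⬝ᵥ x) = r * k * ((fun _ => 1) ⬝ᵥ x) := by
    rw [← smul_eq_mul, ← dotProduct_smul, ← hx.2.2, dotProduct_mulVec, ← hsymm, vecMul_transpose,
      hQ1, smul_dotProduct, smul_eq_mul]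
  have hpos : 0 < (fun _ => (1 : ℝ)) ⬝ᵥ x := by
    have := hx.nonempty
    simpa [dotProduct] using Finset.sum_pos (fun v _ => hx.1 v) Finset.univ_nonempty
  exact mul_right_cancel₀ hpos.ne' h

lemma forall_eq_of_hRegular (hunif : ∀ e ∈ E, e.card = k) (hconn : HConnected E)
    (hx : Eigenpair E ρ x) (hreg : HRegular E) (hle : ∀ v, x v ≤ M) {v₀ : V}
    (hv₀ : x v₀ = M) (v : V) : x v = M := by
  obtain ⟨r, hr⟩ := hreg
  have hρ := hx.eigenvalue_eq_of_deg_eq hunif hr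
  refine hconn.forall_of_closed (p := fun v => x v = M) (fun e he a ha hxa => ?_) hv₀ v
  have hsum : ∑ f ∈ E with a ∈ f, edgeSum x f = ∑ f ∈ E with a ∈ f, (k * M : ℝ) := by
    rw [hx.sum_edgeSum_incident, hxa, Finset.sum_const, show #{f ∈ E | a ∈ f} = r from hr a, hρ,
      nsmul_eq_mul]
    ring
  have hmax := (Finset.sum_eq_sum_iff_of_le fun f hf =>
    hunif f (Finset.mem_filter.1 hf).1 ▸ edgeSum_le hle).1 hsum e (Finset.mem_filter.2 ⟨he, ha⟩)
  exact (edgeSum_eq_card_mul_iff hle).1 (hunif e he ▸ hmax)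

end Eigenpair

/-- For a connected `k`-graph with `m ≥ 1` edges and signless Laplacian eigenpair
`(ρ, x)`: `x_max ≥ √(ρ/(k²m))`, with equality iff `H` is regular. -/
theorem xmax_ge_sqrt_rho_div_k2m {V : Type*} [Fintype V] [DecidableEq V] (k : ℕ)
    (hk : 2 ≤ k) (E : Finset (Finset V)) (hunif : ∀ e ∈ E, e.card = k)
    (hconn : HConnected E) (hE : E.Nonempty)
    (ρ : ℝ) (x : V → ℝ) (hx : Eigenpair E ρ x)
    (xmax : ℝ) (hmax : IsGreatest (Set.range x) xmax) :
    Real.sqrt (ρ / ((k : ℝ) ^ 2 * E.card)) ≤ xmax ∧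
      (xmax = Real.sqrt (ρ / ((k : ℝ) ^ 2 * E.card)) ↔ HRegular E) := by
  obtain ⟨v₀, hv₀⟩ := hmax.1
  have hle : ∀ v, x v ≤ xmax := fun v => hmax.2 ⟨v, rfl⟩
  have hxmax : 0 < xmax := hv₀ ▸ hx.1 v₀
  have hk2m : 0 < (k : ℝ) ^ 2 * E.card := by
    have := hE.card_pos
    positivity
  have hcover : ∀ v, ∃ e ∈ E, v ∈ e := by
    obtain ⟨e, he⟩ := hE
    exact hconn.exists_mem ⟨e, he, Finset.card_pos.1 (by rw [hunif e he]; omega)⟩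
  refine ⟨?_, ?_⟩
  · rw [Real.sqrt_le_left hxmax.le, div_le_iff₀ hk2m]
    linarith [hx.eigenvalue_le hunif hle]
  · rw [eq_comm, Real.sqrt_eq_iff_eq_sq (div_nonneg hx.eigenvalue_nonneg hk2m.le) hxmax.le,
      div_eq_iff hk2m.ne', mul_comm (xmax ^ 2), hx.eigenvalue_eq_iff hunif hle hcover]
    exact ⟨hx.hRegular_of_forall_eq hunif (by omega),
      fun hreg => hx.forall_eq_of_hRegular hunif hconn hreg hle hv₀⟩
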